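/- Necessary compatibility condition: if u is a regular solution of Problem 1 (continuous on D̄) with u(0,y) = φ₀(y), u(1,y) = φ₁(y) for y > 0 and a·u(x/2,-x/2) + b·u((x+1)/2,(x-1)/2) = ψ(x) for x ∈ [0,1], then a²·lim_{y→0+} φ₀(y) - b²·lim_{y→0+} φ₁(y) = a·ψ(0) - b·ψ(1). -/
import Mathlib


open Real Set Filter Topology

theorem compatibility_condition (a b : ℝ) (u : ℝ → ℝ → ℝ)
    (φ₀ φ₁ ψ : ℝ → ℝ) (L₀ L₁ : ℝ)
    (K : Set (ℝ × ℝ))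
    (hK : K = (Set.Icc (0 : ℝ) 1 ×ˢ Set.Icc (0 : ℝ) 1) ∪
      {p : ℝ × ℝ | p.2 ≤ 0 ∧ 0 ≤ p.1 + p.2 ∧ p.1 - p.2 ≤ 1})
    (hu : ContinuousOn (fun p : ℝ × ℝ => u p.1 p.2) K)
    (hφ₀ : ContinuousOn φ₀ (Set.Icc (0 : ℝ) 1))
    (hφ₁ : ContinuousOn φ₁ (Set.Icc (0 : ℝ) 1))
    (hψ : ContinuousOn ψ (Set.Icc (0 : ℝ) 1))
    (hb0 : ∀ y : ℝ, 0 < y → y ≤ 1 → u 0 y = φ₀ y)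
    (hb1 : ∀ y : ℝ, 0 < y → y ≤ 1 → u 1 y = φ₁ y)
    (hnl : ∀ x ∈ Set.Icc (0 : ℝ) 1,
      a * u (x / 2) (-(x / 2)) + b * u ((x + 1) / 2) ((x - 1) / 2) = ψ x)
    (hL₀ : Tendsto φ₀ (nhdsWithin 0 (Set.Ioi 0)) (nhds L₀))
    (hL₁ : Tendsto φ₁ (nhdsWithin 0 (Set.Ioi 0)) (nhds L₁)) :
    a ^ 2 * L₀ - b ^ 2 * L₁ = a * ψ 0 - b * ψ 1 := by
  have hIoo : Set.Ioo (0:ℝ) 1 ∈ nhdsWithin (0:ℝ) (Set.Ioi 0) := by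
    rw [mem_nhdsWithin_iff_exists_mem_nhds_inter]
    exact ⟨Set.Iio 1, Iio_mem_nhds one_pos, fun y hy => ⟨hy.2, hy.1⟩⟩
  have key : ∀ x0 : ℝ, x0 ∈ Set.Icc (0:ℝ) 1 →
      Tendsto (fun y => u x0 y) (nhdsWithin 0 (Set.Ioi 0)) (nhds (u x0 0)) := by
    intro x0 hx0
    have hmem : ((x0, (0:ℝ)) : ℝ × ℝ) ∈ K := by
      rw [hK]; left; exact ⟨hx0, by norm_num⟩
    have hc := (hu.continuousWithinAt hmem).tendsto
    have hmap : Tendsto (fun y : ℝ => ((x0, y) : ℝ × ℝ))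
        (nhdsWithin 0 (Set.Ioi 0)) (nhdsWithin (x0, 0) K) := by
      apply tendsto_nhdsWithin_of_tendsto_nhds_of_eventually_within
      · exact ((continuous_const.prodMk continuous_id).tendsto 0).mono_left
          nhdsWithin_le_nhds
      · filter_upwards [hIoo] with y hy
        rw [hK]; left; exact ⟨hx0, ⟨hy.1.le, hy.2.le⟩⟩
    exact hc.comp hmap
  have h0 : u 0 0 = L₀ := by
    refine tendsto_nhds_unique ((key 0 (by norm_num)).congr' ?_) hL₀
    filter_upwards [hIoo] with y hy using hb0 y hy.1 hy.2.le
  have h1 : u 1 0 = L₁ := by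
    refine tendsto_nhds_unique ((key 1 (by norm_num)).congr' ?_) hL₁
    filter_upwards [hIoo] with y hy using hb1 y hy.1 hy.2.le
  have e0 := hnl 0 (by norm_num)
  have e1 := hnl 1 (by norm_num)
  norm_num at e0 e1
  rw [← h0, ← h1]
  linear_combination a * e0 - b * e1
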